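/- Fix a point m ∈ ℝ⁵ with coordinates (x¹,x²,z,p₁,p₂), the contact covector θ_m = dz − p₁dx¹ − p₂dx², and the 2-covector Ω₅ = dx¹∧dp₁ + dx²∧dp₂ (equal to dθ at m). Let Ψ = A dp₁∧dp₂ + B dp₁∧dx² + C dx¹∧dp₂ + E₁ dp₁∧dx¹ + E₂ dp₂∧dx² + F dx¹∧dx² be a 2-covector at m. Then Ψ ∧ Ω₅ lies in the ideal generated by θ_m (i.e. Ψ ∧ Ω₅ = θ_m ∧ γ for some 3-covector γ) if and only if E₁ + E₂ = 0. -/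

import Mathlib

/-!
Covectors at a point of `ℝ⁵` with coordinates `(x¹,x²,z,p₁,p₂)`
(indexed `0,1,2,3,4`): `dl 0 = dx¹`, `dl 1 = dx²`, `dl 2 = dz`, `dl 3 = dp₁`,
`dl 4 = dp₂`.  `wedgeF` is the wedge product of alternating forms.
-/

noncomputable section

abbrev V5 : Type := Fin 5 → ℝ

/-- The wedge product of real-valued alternating forms. -/
noncomputable def wedgeF {M : Type} [AddCommGroup M] [Module ℝ M] {a b : ℕ}
    (f : M [⋀^Fin a]→ₗ[ℝ] ℝ) (g : M [⋀^Fin b]→ₗ[ℝ] ℝ) :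
    M [⋀^Fin (a + b)]→ₗ[ℝ] ℝ :=
  ((TensorProduct.lid ℝ ℝ).toLinearMap.compAlternatingMap
    (f.domCoprod g)).domDomCongr finSumFinEquiv

/-- The coordinate covectors (as alternating 1-forms). -/
noncomputable def dl {n : ℕ} (i : Fin n) : (Fin n → ℝ) [⋀^Fin 1]→ₗ[ℝ] ℝ :=
  AlternatingMap.ofSubsingleton ℝ (Fin n → ℝ) ℝ 0 (LinearMap.proj i)

/-- The contact covector `θ = dz − p₁dx¹ − p₂dx²` at a point with coordinate
values `p₁, p₂`. -/
noncomputable def θc (p1 p2 : ℝ) : V5 [⋀^Fin 1]→ₗ[ℝ] ℝ :=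
  dl 2 - p1 • dl 0 - p2 • dl 1

/-- `Ω₅ = dx¹∧dp₁ + dx²∧dp₂` (the value of `dθ`). -/
noncomputable def Ω5 : V5 [⋀^Fin 2]→ₗ[ℝ] ℝ :=
  wedgeF (dl 0) (dl 3) + wedgeF (dl 1) (dl 4)

/-- `Ψ = A dp₁∧dp₂ + B dp₁∧dx² + C dx¹∧dp₂ + E₁ dp₁∧dx¹ + E₂ dp₂∧dx² + F dx¹∧dx²`. -/
noncomputable def Ψc (A B C E1 E2 F : ℝ) : V5 [⋀^Fin 2]→ₗ[ℝ] ℝ :=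
  A • wedgeF (dl 3) (dl 4) + B • wedgeF (dl 3) (dl 1) +
  C • wedgeF (dl 0) (dl 4) + E1 • wedgeF (dl 3) (dl 0) +
  E2 • wedgeF (dl 4) (dl 1) + F • wedgeF (dl 0) (dl 1)

/-!
Only the `E`-terms of `Ψ` meet `Ω₅` in a non-zero 4-covector:
`Ψ ∧ Ω₅ = (E₁ + E₂) dp₁∧dx¹∧dx²∧dp₂`. A multiple `θ ∧ γ` vanishes on every 4-tuple of vectors
in `ker θ`, whereas `dp₁∧dx¹∧dx²∧dp₂` takes the value `1` on the frame
`∂_{p₁}, ∂_{x¹} + p₁∂_z, ∂_{x²} + p₂∂_z, ∂_{p₂}` of `ker θ`.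
-/

open Equiv

theorem Equiv.Perm.sum_fin_succ {M : Type*} [AddCommMonoid M] {n : ℕ}
    (F : Perm (Fin (n + 1)) → M) :
    ∑ σ, F σ = ∑ p : Fin (n + 1), ∑ σ : Perm (Fin n), F (Perm.decomposeFin.symm (p, σ)) := by
  rw [← Fintype.sum_prod_type']
  exact Fintype.sum_equiv Perm.decomposeFin _ _ fun σ => by simp

theorem Equiv.Perm.decomposeFin_symm_apply_of_ne_zero {n : ℕ} (p : Fin (n + 1))
    (e : Perm (Fin n)) {i : Fin (n + 1)} (hi : i ≠ 0) :
    Perm.decomposeFin.symm (p, e) i = swap 0 p (e (i.pred hi)).succ := by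
  rw [← Perm.decomposeFin_symm_apply_succ, Fin.succ_pred]

theorem AlternatingMap.apply_vecCons_swap {R M N : Type*} [Semiring R] [AddCommMonoid M]
    [Module R M] [AddCommGroup N] [Module R N] (f : M [⋀^Fin 2]→ₗ[R] N) (x y : M) :
    f ![x, y] = -f ![y, x] := by
  rw [← f.map_swap (v := ![y, x]) (i := 0) (j := 1) (by decide)]
  congr 1
  ext i
  fin_cases i <;> rfl

section Wedge

variable {M : Type} [AddCommGroup M] [Module ℝ M]

theorem wedgeF_apply_mul_factorial {a b : ℕ} (f : M [⋀^Fin a]→ₗ[ℝ] ℝ)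
    (g : M [⋀^Fin b]→ₗ[ℝ] ℝ) (v : Fin (a + b) → M) :
    (a.factorial * b.factorial : ℝ) * wedgeF f g v =
      ∑ τ : Perm (Fin (a + b)), (Perm.sign τ : ℝ) *
        (f (fun i => v (τ (Fin.castAdd b i))) * g (fun j => v (τ (Fin.natAdd a j)))) := by
  have h := congrArg (· (v ∘ finSumFinEquiv)) (MultilinearMap.domCoprod_alternization_eq f g)
  simp only [MultilinearMap.alternatization_apply, Fintype.card_fin,
    AlternatingMap.smul_apply, MultilinearMap.domDomCongr_apply,
    MultilinearMap.domCoprod_apply] at h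
  calc (a.factorial * b.factorial : ℝ) * wedgeF f g v
      = TensorProduct.lid ℝ ℝ
          ((a.factorial * b.factorial) • f.domCoprod g (v ∘ finSumFinEquiv)) := by
        rw [map_nsmul, nsmul_eq_mul, Nat.cast_mul]
        rfl
    _ = _ := by
        rw [← h, map_sum]
        refine Fintype.sum_equiv finSumFinEquiv.permCongr _ _ fun σ => ?_
        rw [Units.smul_def, map_zsmul]
        simp [Perm.sign_permCongr, permCongr_apply]

theorem wedgeF_apply_eq_zero_of_forall {b : ℕ} (f : M [⋀^Fin 1]→ₗ[ℝ] ℝ)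
    (g : M [⋀^Fin b]→ₗ[ℝ] ℝ) (v : Fin (1 + b) → M) (hv : ∀ k, f (fun _ => v k) = 0) :
    wedgeF f g v = 0 := by
  have h := wedgeF_apply_mul_factorial f g v
  have hsum : ∀ τ : Perm (Fin (1 + b)),
      f (fun i => v (τ (Fin.castAdd b i))) = 0 := fun τ => by
    rw [← hv (τ 0)]
    congr 1
    ext i
    rw [Subsingleton.elim i 0]
    rfl
  simp only [hsum, zero_mul, mul_zero, Finset.sum_const_zero] at h
  simpa [Nat.factorial_ne_zero] using h

@[simp]
theorem wedgeF_zero {a b : ℕ} (f : M [⋀^Fin a]→ₗ[ℝ] ℝ) :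
    wedgeF f (0 : M [⋀^Fin b]→ₗ[ℝ] ℝ) = 0 := by
  simp [wedgeF, ← AlternatingMap.domCoprod'_apply]

theorem wedgeF_two_two_apply (f g : M [⋀^Fin 2]→ₗ[ℝ] ℝ) (v : Fin 4 → M) :
    wedgeF f g v =
      f ![v 0, v 1] * g ![v 2, v 3] - f ![v 0, v 2] * g ![v 1, v 3]
      + f ![v 0, v 3] * g ![v 1, v 2] + f ![v 1, v 2] * g ![v 0, v 3]
      - f ![v 1, v 3] * g ![v 0, v 2] + f ![v 2, v 3] * g ![v 0, v 1] := by
  have h := wedgeF_apply_mul_factorial f g v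
  have hτ : ∀ τ : Perm (Fin 4), (fun i => v (τ (Fin.castAdd 2 i))) = ![v (τ 0), v (τ 1)] ∧
      (fun j => v (τ (Fin.natAdd 2 j))) = ![v (τ 2), v (τ 3)] := fun τ => by
    constructor <;> ext i <;> fin_cases i <;> rfl
  simp only [hτ] at h
  simp [Perm.sum_fin_succ, Fin.sum_univ_succ, Perm.decomposeFin.symm_sign,
    Perm.decomposeFin_symm_apply_of_ne_zero, swap_apply_def, Nat.factorial] at h
  -- alternation of `f` and `g` collects the 24 terms into the 6 shuffles, 4 equal terms each
  simp only [f.apply_vecCons_swap (v 1) (v 0), f.apply_vecCons_swap (v 2) (v 0),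
    f.apply_vecCons_swap (v 3) (v 0), f.apply_vecCons_swap (v 2) (v 1),
    f.apply_vecCons_swap (v 3) (v 1), f.apply_vecCons_swap (v 3) (v 2),
    g.apply_vecCons_swap (v 1) (v 0), g.apply_vecCons_swap (v 2) (v 0),
    g.apply_vecCons_swap (v 3) (v 0), g.apply_vecCons_swap (v 2) (v 1),
    g.apply_vecCons_swap (v 3) (v 1), g.apply_vecCons_swap (v 3) (v 2)] at h
  linarith

end Wedge

@[simp]
theorem dl_apply {n : ℕ} (i : Fin n) (u : Fin 1 → Fin n → ℝ) : dl i u = u 0 i := rfl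

theorem dl_wedgeF_dl_apply {n : ℕ} (i j : Fin n) (u : Fin 2 → Fin n → ℝ) :
    wedgeF (dl i) (dl j) u = u 0 i * u 1 j - u 1 i * u 0 j := by
  have h := wedgeF_apply_mul_factorial (dl i) (dl j) u
  simp [Perm.sum_fin_succ, Fin.sum_univ_succ, Perm.decomposeFin.symm_sign, swap_apply_def] at h
  linarith

theorem wedgeF_Ψc_Ω5 (A B C E1 E2 F : ℝ) :
    wedgeF (Ψc A B C E1 E2 F) Ω5 =
      (E1 + E2) • wedgeF (wedgeF (dl 3) (dl 0)) (wedgeF (dl 1) (dl 4)) := by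
  ext v
  simp only [AlternatingMap.smul_apply, smul_eq_mul, wedgeF_two_two_apply, Ψc, Ω5,
    AlternatingMap.add_apply, dl_wedgeF_dl_apply, Matrix.cons_val_zero, Matrix.cons_val_one]
  ring

def contactFrame (p1 p2 : ℝ) : Fin 4 → V5 :=
  ![![0, 0, 0, 1, 0], ![1, 0, p1, 0, 0], ![0, 1, p2, 0, 0], ![0, 0, 0, 0, 1]]

theorem θc_contactFrame (p1 p2 : ℝ) (k : Fin 4) :
    θc p1 p2 (fun _ => contactFrame p1 p2 k) = 0 := by
  fin_cases k <;> simp [θc, contactFrame]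

theorem wedgeF_wedgeF_dl_contactFrame (p1 p2 : ℝ) :
    wedgeF (wedgeF (dl 3) (dl 0)) (wedgeF (dl 1) (dl 4)) (contactFrame p1 p2) = 1 := by
  simp [wedgeF_two_two_apply, dl_wedgeF_dl_apply, contactFrame]

/-- the 4-covector `Ψ ∧ Ω₅` lies in the ideal generated by `θ`
(i.e. `Ψ ∧ Ω₅ = θ ∧ γ` for some 3-covector `γ`) iff `E₁ + E₂ = 0`. -/
theorem stmt_16 (p1 p2 A B C E1 E2 F : ℝ) :
    (∃ γ : V5 [⋀^Fin 3]→ₗ[ℝ] ℝ,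
      (wedgeF (Ψc A B C E1 E2 F) Ω5 : V5 [⋀^Fin 4]→ₗ[ℝ] ℝ) =
      (wedgeF (θc p1 p2) γ : V5 [⋀^Fin 4]→ₗ[ℝ] ℝ)) ↔
    E1 + E2 = 0 := by
  rw [wedgeF_Ψc_Ω5]
  constructor
  · rintro ⟨γ, hγ⟩
    have h := congrArg (· (contactFrame p1 p2)) hγ
    rwa [AlternatingMap.smul_apply, wedgeF_wedgeF_dl_contactFrame, smul_eq_mul, mul_one,
      wedgeF_apply_eq_zero_of_forall _ γ _ (θc_contactFrame p1 p2)] at h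
  · intro hE
    exact ⟨0, by simp [hE]⟩
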